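/- With the hypotheses of the previous block-matrix lemma, for any right-hand side (0, r) ∈ ℝⁿ × ℝ^m, the system H d + N h = 0, Nᵀ d - Q h = r has a unique solution (d, h). -/

import Mathlib

/-!
If `(d, h)` solves the homogeneous system, then `dᵀHd + hᵀQh = dᵀ(Hd + Nh) = 0` with both terms
nonnegative, so `d = 0` and `h` vanishes wherever `Q ≠ 0`. Then `Nh = -Hd = 0` involves only the
columns with `Qᵢ = 0`, which are independent, so `h = 0`. The square block system is therefore
injective, hence bijective.
-/

open Matrix

variable {ι κ R : Type*} [Fintype κ]

namespace Matrix

theorem dotProduct_diagonal_mulVec [CommSemiring R] [DecidableEq κ] (Q h : κ → R) :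
    h ⬝ᵥ diagonal Q *ᵥ h = ∑ i, Q i * h i ^ 2 := by
  simp only [dotProduct, mulVec_diagonal]
  exact Finset.sum_congr rfl fun i _ => by ring

theorem eq_zero_of_dotProduct_diagonal_mulVec_eq_zero [DecidableEq κ] {Q h : κ → ℝ}
    (hQ : ∀ i, 0 ≤ Q i) (h0 : h ⬝ᵥ diagonal Q *ᵥ h = 0) {i : κ} (hi : Q i ≠ 0) : h i = 0 := by
  rw [dotProduct_diagonal_mulVec,
    Finset.sum_eq_zero_iff_of_nonneg fun j _ => mul_nonneg (hQ j) (sq_nonneg (h j))] at h0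
  simpa [hi] using h0 i (Finset.mem_univ i)

theorem mulVec_eq_sum_smul_transpose [CommSemiring R] (N : Matrix ι κ R) (h : κ → R) :
    N *ᵥ h = ∑ j, h j • Nᵀ j := by
  ext r
  simp [mulVec, dotProduct, Finset.sum_apply, mul_comm]

theorem eq_zero_of_mulVec_eq_zero_of_linearIndependent [CommRing R] {N : Matrix ι κ R}
    {p : κ → Prop} (hind : LinearIndependent R fun j : {j // p j} => fun r => N r j.1)
    {h : κ → R} (hsupp : ∀ j, ¬ p j → h j = 0) (hNh : N *ᵥ h = 0) : h = 0 := by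
  classical
  have hsum : ∑ j : {j // p j}, h j • Nᵀ j = 0 := by
    rw [← hNh, mulVec_eq_sum_smul_transpose, ← Fintype.sum_subtype_add_sum_subtype p,
      Fintype.sum_eq_zero (fun j : {j // ¬p j} => h j • Nᵀ j)
      fun j => by simp [hsupp j j.2], add_zero]
  ext j
  by_cases hj : p j
  · exact Fintype.linearIndependent_iff.mp hind (fun j => h j) hsum ⟨j, hj⟩
  · exact hsupp j hj

theorem dotProduct_mulVec_add_dotProduct_mulVec_eq_zero [Fintype ι] [CommRing R]
    {H : Matrix ι ι R} {N : Matrix ι κ R} {D : Matrix κ κ R} {d : ι → R} {h : κ → R}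
    (h₁ : H *ᵥ d + N *ᵥ h = 0) (h₂ : Nᵀ *ᵥ d = D *ᵥ h) :
    d ⬝ᵥ H *ᵥ d + h ⬝ᵥ D *ᵥ h = 0 := by
  rw [← h₂, dotProduct_mulVec h Nᵀ, vecMul_transpose, dotProduct_comm (N *ᵥ h),
    ← dotProduct_add, h₁, dotProduct_zero]

end Matrix

def saddlePointMap [Fintype ι] [DecidableEq κ] (H : Matrix ι ι ℝ) (N : Matrix ι κ ℝ)
    (Q : κ → ℝ) :
    ((ι → ℝ) × (κ → ℝ)) →ₗ[ℝ] (ι → ℝ) × (κ → ℝ) :=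
  (H.mulVecLin.coprod N.mulVecLin).prod (Nᵀ.mulVecLin.coprod (-(diagonal Q).mulVecLin))

theorem saddlePointMap_apply [Fintype ι] [DecidableEq κ] (H : Matrix ι ι ℝ)
    (N : Matrix ι κ ℝ) (Q : κ → ℝ) (p : (ι → ℝ) × (κ → ℝ)) :
    saddlePointMap H N Q p = (H *ᵥ p.1 + N *ᵥ p.2, Nᵀ *ᵥ p.1 - diagonal Q *ᵥ p.2) := by
  simp [saddlePointMap, sub_eq_add_neg, mulVec_transpose]

theorem saddlePointMap_injective [Fintype ι] [DecidableEq κ] {H : Matrix ι ι ℝ} (hH : H.PosDef)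
    {N : Matrix ι κ ℝ} {Q : κ → ℝ} (hQ : ∀ i, 0 ≤ Q i)
    (hind : LinearIndependent ℝ fun j : {j // Q j = 0} => fun r => N r j.1) :
    Function.Injective (saddlePointMap H N Q) := by
  rw [← LinearMap.ker_eq_bot, LinearMap.ker_eq_bot']
  rintro ⟨d, h⟩ hdh
  simp only [saddlePointMap_apply, Prod.mk_eq_zero, sub_eq_zero] at hdh
  obtain ⟨h₁, h₂⟩ := hdh
  have henergy := dotProduct_mulVec_add_dotProduct_mulVec_eq_zero h₁ h₂
  have hHd : 0 ≤ d ⬝ᵥ H *ᵥ d := by simpa using hH.posSemidef.dotProduct_mulVec_nonneg d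
  have hQh : 0 ≤ h ⬝ᵥ diagonal Q *ᵥ h := by
    rw [dotProduct_diagonal_mulVec]
    exact Finset.sum_nonneg fun i _ => mul_nonneg (hQ i) (sq_nonneg (h i))
  have hd : d = 0 := by
    by_contra hd
    have := hH.dotProduct_mulVec_pos hd
    simp only [star_trivial] at this
    linarith
  have hQh0 : h ⬝ᵥ diagonal Q *ᵥ h = 0 := by linarith
  have hNh : N *ᵥ h = 0 := by simpa [hd] using h₁
  have hh : h = 0 := eq_zero_of_mulVec_eq_zero_of_linearIndependent hind
    (fun j hj => eq_zero_of_dotProduct_diagonal_mulVec_eq_zero hQ hQh0 hj) hNh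
  simp [hd, hh]

/-- Under the hypotheses of the block-matrix lemma, for any right-hand side
`(0, r)` the system `H d + N h = 0`, `Nᵀ d - Q h = r` has a unique solution `(d, h)`. -/
theorem stmt_4 (n m : ℕ) (H : Matrix (Fin n) (Fin n) ℝ) (hH : H.PosDef)
    (N : Matrix (Fin n) (Fin m) ℝ) (Q : Fin m → ℝ) (hQ : ∀ i, 0 ≤ Q i)
    (hind : LinearIndependent ℝ
      (fun i : {i : Fin m // Q i = 0} => (fun r => N r i.1 : Fin n → ℝ)))
    (r : Fin m → ℝ) :
    ∃! p : (Fin n → ℝ) × (Fin m → ℝ),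
      H.mulVec p.1 + N.mulVec p.2 = 0 ∧
      Nᵀ.mulVec p.1 - (Matrix.diagonal Q).mulVec p.2 = r := by
  have hinj := saddlePointMap_injective hH hQ hind
  have hbij : Function.Bijective (saddlePointMap H N Q) :=
    ⟨hinj, LinearMap.injective_iff_surjective.mp hinj⟩
  simpa [saddlePointMap_apply, Prod.ext_iff] using hbij.existsUnique (0, r)
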